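/- Let X be uniform on {0,1} and Y = X ⊕ N with N ~ Bernoulli(p) independent of X, 0 ≤ p ≤ 1. Then H(X | Y) = h(p), the binary entropy of p. Moreover, among all input distributions P_X on {0,1}, the uniform distribution maximizes H(X|Y) for 0 < p < 1/2; in fact for every P_X, H(X|Y) ≤ h(p). -/

import Mathlib

/-!
Since the joint law is `P_X(x) · W(y | x)` with every row of `W` a Bernoulli(`p`) law, the chain
rule gives `H(X, Y) = H(X) + h(p)`, while `Y` is Bernoulli with parameter `a ⋆ p = a(1-p) + (1-a)p`
where `a = P_X(0)`. Hence `H(X | Y) = h(p) + h(a) - h(a ⋆ p)`. As `a ⋆ p` is a convex combination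
of `a` and `1 - a`, concavity of `h` and `h(a) = h(1 - a)` give `h(a) ≤ h(a ⋆ p)`, with equality
for the uniform input `a = 1/2`.
-/

/-- Binary entropy function (base 2). -/
noncomputable def binEnt (x : ℝ) : ℝ :=
  -(x * Real.logb 2 x) - (1 - x) * Real.logb 2 (1 - x)

/-- Shannon entropy (bits) of a distribution on a finite type. -/
noncomputable def ent {α : Type*} [Fintype α] (f : α → ℝ) : ℝ :=
  ∑ a, -(f a * Real.logb 2 (f a))

/-- Transition probability of a BSC with crossover `r`. -/
def bsc (r : ℝ) (x y : Bool) : ℝ := if y = x then 1 - r else r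

open Real

lemma ent_eq_sum_negMulLog {α : Type*} [Fintype α] (f : α → ℝ) :
    ent f = (∑ a, negMulLog (f a)) / log 2 := by
  rw [ent, Finset.sum_div]
  congr 1 with a
  rw [negMulLog, logb]
  ring

theorem ent_mul_channel {α β : Type*} [Fintype α] [Fintype β] (P : α → ℝ) (W : α → β → ℝ)
    (hW : ∀ x, ∑ y, W x y = 1) :
    ent (fun t : α × β => P t.1 * W t.1 t.2) = ent P + ∑ x, P x * ent (W x) := by
  simp only [ent_eq_sum_negMulLog, negMulLog_mul, Fintype.sum_prod_type, Finset.sum_add_distrib,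
    ← Finset.sum_mul, hW, one_mul, ← Finset.mul_sum]
  simp only [add_div, Finset.sum_div, mul_div_assoc]

lemma binEnt_eq_binEntropy_div (x : ℝ) : binEnt x = binEntropy x / log 2 := by
  simp only [binEnt, binEntropy_eq_negMulLog_add_negMulLog_one_sub, negMulLog, logb]
  ring

lemma ent_bool {f : Bool → ℝ} (hf : f false + f true = 1) : ent f = binEnt (f false) := by
  rw [ent, Fintype.sum_bool, binEnt, show f true = 1 - f false by linarith]
  ring

lemma sum_bsc (p : ℝ) (x : Bool) : ∑ y, bsc p x y = 1 := by
  cases x <;> simp [bsc]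

lemma ent_bsc (p : ℝ) (x : Bool) : ent (bsc p x) = binEnt p := by
  cases x <;> simp only [ent, bsc, binEnt, Fintype.sum_bool] <;> norm_num <;> ring

theorem ent_joint_sub_ent_output_bsc (p : ℝ) {PX : Bool → ℝ} (hPX : PX false + PX true = 1) :
    ent (fun t : Bool × Bool => PX t.1 * bsc p t.1 t.2)
        - ent (fun y : Bool => ∑ x : Bool, PX x * bsc p x y)
      = binEnt (PX false) + binEnt p - binEnt (PX false * (1 - p) + PX true * p) := by
  have hY₀ : ∑ x, PX x * bsc p x false = PX false * (1 - p) + PX true * p := by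
    simp [bsc, add_comm]
  have hY₁ : ∑ x, PX x * bsc p x true = PX false * p + PX true * (1 - p) := by
    simp [bsc, add_comm]
  have hY : (∑ x, PX x * bsc p x false) + ∑ x, PX x * bsc p x true = 1 := by
    rw [hY₀, hY₁]
    linear_combination hPX
  rw [ent_mul_channel PX _ (sum_bsc p), ent_bool hPX, ent_bool hY, hY₀]
  simp only [ent_bsc, ← Finset.sum_mul, Fintype.sum_bool, add_comm (PX true), hPX, one_mul]

theorem binEnt_le_binEnt_crossover {a p : ℝ} (ha₀ : 0 ≤ a) (ha₁ : a ≤ 1) (hp₀ : 0 ≤ p)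
    (hp₁ : p ≤ 1) : binEnt a ≤ binEnt (a * (1 - p) + (1 - a) * p) := by
  rw [binEnt_eq_binEntropy_div, binEnt_eq_binEntropy_div]
  gcongr
  have hconc := strictConcave_binEntropy.concaveOn.2 (x := a) (y := 1 - a) ⟨ha₀, ha₁⟩
    ⟨by linarith, by linarith⟩ (sub_nonneg.2 hp₁) hp₀ (by ring)
  simp only [smul_eq_mul, binEntropy_one_sub] at hconc
  calc binEntropy a = (1 - p) * binEntropy a + p * binEntropy a := by ring
    _ ≤ binEntropy ((1 - p) * a + p * (1 - a)) := hconc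
    _ = binEntropy (a * (1 - p) + (1 - a) * p) := by congr 1; ring

/-- For a BSC(p): with uniform input, `H(X|Y) = H(X,Y) - H(Y) = h(p)`; moreover, for
`0 < p < 1/2` and every input distribution `P_X`, `H(X|Y) ≤ h(p)` (so the uniform input
maximizes `H(X|Y)`). -/
theorem condEnt_bsc (p : ℝ) :
    (0 ≤ p → p ≤ 1 →
      ent (fun t : Bool × Bool => (1/2 : ℝ) * bsc p t.1 t.2)
        - ent (fun y : Bool => ∑ x : Bool, (1/2 : ℝ) * bsc p x y) = binEnt p) ∧
    (0 < p → p < 1/2 →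
      ∀ PX : Bool → ℝ, (∀ x, 0 ≤ PX x) → (∑ x, PX x = 1) →
        ent (fun t : Bool × Bool => PX t.1 * bsc p t.1 t.2)
          - ent (fun y : Bool => ∑ x : Bool, PX x * bsc p x y) ≤ binEnt p) := by
  refine ⟨fun _ _ => ?_, fun hp₀ hp₁ PX hPX hsum => ?_⟩
  · rw [ent_joint_sub_ent_output_bsc p (PX := fun _ => 1/2) (by norm_num),
      show (1/2 : ℝ) * (1 - p) + 1/2 * p = 1/2 by ring]
    ring
  · have hPX₁ : PX false + PX true = 1 := by
      rw [Fintype.sum_bool] at hsum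
      linarith
    have hmix := binEnt_le_binEnt_crossover (hPX false) (by linarith [hPX true]) hp₀.le
      (by linarith)
    rw [ent_joint_sub_ent_output_bsc p hPX₁, show PX true = 1 - PX false by linarith]
    linarith
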